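/- arXiv:2506.23599 — 6 statements merged into one kernel-verified Lean document; each statement's English description precedes it below -/
import Mathlib

section
/- For all m ≥ 2, the Cayley continuant satisfies the three-term recurrence Cay_m(x;y) = x·Cay_{m-1}(x;y) − (m−1)(y−m+2)·Cay_{m-2}(x;y), where Cay_0(x;y)=1 and Cay_1(x;y)=x. -/
open Finset

/-- Falling factorial `r(r-1)⋯(r-j+1)`. -/
noncomputable def fallFac (r : ℂ) (j : ℕ) : ℂ := (descPochhammer ℂ j).eval r

/-- Rising factorial `r(r+1)⋯(r+j-1)`. -/
noncomputable def riseFac (r : ℂ) (j : ℕ) : ℂ := (ascPochhammer ℂ j).eval r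

/-- Cayley continuant `Cay_m(x;y)`. -/
noncomputable def Cay (m : ℕ) (x y : ℂ) : ℂ :=
  ∑ j ∈ range (m + 1),
    (m.choose j : ℂ) * fallFac ((x + y) / 2) j * riseFac ((x - y) / 2) (m - j)

lemma fall_succ (r : ℂ) (j : ℕ) : fallFac r (j+1) = fallFac r j * (r - j) := by
  simp [fallFac, descPochhammer_succ_eval]

lemma rise_succ (r : ℂ) (j : ℕ) : riseFac r (j+1) = riseFac r j * (r + j) := by
  simp [riseFac, ascPochhammer_succ_eval]

lemma cay_key (x y : ℂ) (n : ℕ) :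
    Cay (n+2) x y = x * Cay (n+1) x y - ((n : ℂ) + 1) * (y - (n : ℂ)) * Cay n x y := by
  set a : ℂ := (x + y) / 2 with ha
  set b : ℂ := (x - y) / 2 with hb
  have hab : a + b = x := by rw [ha, hb]; ring
  have hba : b - a = -y := by rw [ha, hb]; ring
  -- Step A : Pascal split
  have hA : Cay (n+2) x y
      = (∑ i ∈ range (n+2), ((n+1).choose i : ℂ) * fallFac a (i+1) * riseFac b (n+1-i))
        + ∑ j ∈ range (n+3), ((n+1).choose j : ℂ) * fallFac a j * riseFac b (n+2-j) := by
    rw [Cay]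
    rw [Finset.sum_range_succ' (fun j => ((n+2).choose j : ℂ) * fallFac a j * riseFac b (n+2-j)) (n+2),
        Finset.sum_range_succ' (fun j => ((n+1).choose j : ℂ) * fallFac a j * riseFac b (n+2-j)) (n+2)]
    have hterm : ∀ i ∈ range (n+2),
        ((n+2).choose (i+1) : ℂ) * fallFac a (i+1) * riseFac b (n+2-(i+1))
        = ((n+1).choose i : ℂ) * fallFac a (i+1) * riseFac b (n+1-i)
          + ((n+1).choose (i+1) : ℂ) * fallFac a (i+1) * riseFac b (n+2-(i+1)) := by
      intro i _
      have h1 : (n+2).choose (i+1) = (n+1).choose i + (n+1).choose (i+1) :=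
        Nat.choose_succ_succ (n+1) i
      have h2 : n+2-(i+1) = n+1-i := by omega
      rw [h1, h2]
      push_cast
      ring
    rw [Finset.sum_congr rfl hterm, Finset.sum_add_distrib]
    simp
    ring
  have hB : (∑ j ∈ range (n+3), ((n+1).choose j : ℂ) * fallFac a j * riseFac b (n+2-j))
      = ∑ j ∈ range (n+2), ((n+1).choose j : ℂ) * fallFac a j * riseFac b (n+2-j) := by
    rw [Finset.sum_range_succ]
    simp [Nat.choose_succ_self]
  -- Step B : single combined sum
  have hC : Cay (n+2) x y
      = ∑ i ∈ range (n+2), ((n+1).choose i : ℂ) * fallFac a i * riseFac b (n+1-i)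
          * ((a - i) + (b + ((n : ℂ) + 1 - i))) := by
    rw [hA, hB, ← Finset.sum_add_distrib]
    refine Finset.sum_congr rfl ?_
    intro i hi
    have hi' : i ≤ n + 1 := by simpa [Nat.lt_succ_iff] using Finset.mem_range.mp hi
    have h2 : n+2-i = (n+1-i)+1 := by omega
    have h3 : ((n+1-i : ℕ) : ℂ) = (n : ℂ) + 1 - i := by
      push_cast [Nat.cast_sub hi']
      ring
    rw [fall_succ, h2, rise_succ, h3]
    ring
  -- split off x * Cay (n+1)
  have hCay1 : Cay (n+1) x y
      = ∑ i ∈ range (n+2), ((n+1).choose i : ℂ) * fallFac a i * riseFac b (n+1-i) := rfl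
  have hS : (∑ i ∈ range (n+2), ((n+1).choose i : ℂ) * fallFac a i * riseFac b (n+1-i)
        * ((n : ℂ) + 1 - 2 * i))
      = ((n : ℂ) + 1) * (b - a + n) * Cay n x y := by
    have hsplit : ∀ i ∈ range (n+2),
        ((n+1).choose i : ℂ) * fallFac a i * riseFac b (n+1-i) * ((n : ℂ) + 1 - 2 * i)
        = (((n+1-i) * (n+1).choose i : ℕ) : ℂ) * fallFac a i * riseFac b (n+1-i)
          - ((i * (n+1).choose i : ℕ) : ℂ) * fallFac a i * riseFac b (n+1-i) := by
      intro i hi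
      have hi' : i ≤ n + 1 := by simpa [Nat.lt_succ_iff] using Finset.mem_range.mp hi
      have h3 : ((n+1-i : ℕ) : ℂ) = (n : ℂ) + 1 - i := by
        push_cast [Nat.cast_sub hi']
        ring
      push_cast [h3]
      ring
    rw [Finset.sum_congr rfl hsplit, Finset.sum_sub_distrib]
    -- first sum
    have h1 : (∑ i ∈ range (n+2),
          (((n+1-i) * (n+1).choose i : ℕ) : ℂ) * fallFac a i * riseFac b (n+1-i))
        = ∑ i ∈ range (n+1),
          ((n : ℂ) + 1) * ((n.choose i : ℂ) * fallFac a i * (riseFac b (n-i) * (b + ((n : ℂ) - i)))) := by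
      rw [Finset.sum_range_succ]
      simp only [Nat.sub_self, Nat.zero_mul, Nat.cast_zero, zero_mul]
      rw [add_zero]
      refine Finset.sum_congr rfl ?_
      intro i hi
      have hi' : i ≤ n := by simpa [Nat.lt_succ_iff] using Finset.mem_range.mp hi
      have hch : (n+1-i) * (n+1).choose i = (n+1) * n.choose i := by
        calc (n+1-i) * (n+1).choose i = (n+1).choose i * (n+1-i) := mul_comm _ _
          _ = n.choose i * (n+1) := (Nat.choose_mul_succ_eq n i).symm
          _ = (n+1) * n.choose i := mul_comm _ _
      have h2 : n+1-i = (n-i)+1 := by omega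
      have h3 : ((n-i : ℕ) : ℂ) = (n : ℂ) - i := by
        push_cast [Nat.cast_sub hi']
        ring
      rw [hch, h2, rise_succ, h3]
      push_cast
      ring
    -- second sum
    have h2 : (∑ i ∈ range (n+2),
          ((i * (n+1).choose i : ℕ) : ℂ) * fallFac a i * riseFac b (n+1-i))
        = ∑ i ∈ range (n+1),
          ((n : ℂ) + 1) * ((n.choose i : ℂ) * (fallFac a i * (a - i)) * riseFac b (n-i)) := by
      rw [Finset.sum_range_succ' (fun i => ((i * (n+1).choose i : ℕ) : ℂ) * fallFac a i * riseFac b (n+1-i)) (n+1)]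
      simp only [Nat.zero_mul, Nat.cast_zero, zero_mul, add_zero]
      refine Finset.sum_congr rfl ?_
      intro i hi
      have hch : (i+1) * (n+1).choose (i+1) = (n+1) * n.choose i := by
        calc (i+1) * (n+1).choose (i+1) = (n+1).choose (i+1) * (i+1) := mul_comm _ _
          _ = Nat.succ n * n.choose i := (Nat.add_one_mul_choose_eq n i).symm
          _ = (n+1) * n.choose i := rfl
      have hsub : n+1-(i+1) = n-i := by omega
      rw [hch, hsub, fall_succ]
      push_cast
      ring
    rw [h1, h2, ← Finset.sum_sub_distrib]
    have hCayn : Cay n x y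
        = ∑ i ∈ range (n+1), (n.choose i : ℂ) * fallFac a i * riseFac b (n-i) := rfl
    rw [hCayn, Finset.mul_sum]
    refine Finset.sum_congr rfl ?_
    intro i hi
    ring
  calc Cay (n+2) x y
      = ∑ i ∈ range (n+2), ((n+1).choose i : ℂ) * fallFac a i * riseFac b (n+1-i)
          * ((a - i) + (b + ((n : ℂ) + 1 - i))) := hC
    _ = (a + b) * (∑ i ∈ range (n+2), ((n+1).choose i : ℂ) * fallFac a i * riseFac b (n+1-i))
        + ∑ i ∈ range (n+2), ((n+1).choose i : ℂ) * fallFac a i * riseFac b (n+1-i)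
          * ((n : ℂ) + 1 - 2 * i) := by
        rw [Finset.mul_sum, ← Finset.sum_add_distrib]
        refine Finset.sum_congr rfl ?_
        intro i hi
        ring
    _ = x * Cay (n+1) x y + ((n : ℂ) + 1) * (b - a + n) * Cay n x y := by
        rw [hS, hab, hCay1]
    _ = x * Cay (n+1) x y - ((n : ℂ) + 1) * (y - (n : ℂ)) * Cay n x y := by
        rw [hba]; ring

/-- The Cayley continuants satisfy `Cay_0 = 1`, `Cay_1 = x`, and the
three-term recurrence `Cay_m = x·Cay_{m-1} − (m−1)(y−m+2)·Cay_{m-2}` for `m ≥ 2`. -/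
theorem cayley_recurrence (x y : ℂ) :
    Cay 0 x y = 1 ∧ Cay 1 x y = x ∧
    ∀ m : ℕ, 2 ≤ m →
      Cay m x y =
        x * Cay (m - 1) x y - ((m : ℂ) - 1) * (y - (m : ℂ) + 2) * Cay (m - 2) x y := by
  refine ⟨?_, ?_, ?_⟩
  · simp [Cay, fallFac, riseFac]
  · simp [Cay, fallFac, riseFac, Finset.sum_range_succ]
    ring
  · intro m hm
    obtain ⟨n, rfl⟩ : ∃ n, m = n + 2 := ⟨m - 2, by omega⟩
    have h1 : n + 2 - 1 = n + 1 := rfl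
    have h2 : n + 2 - 2 = n := rfl
    rw [h1, h2, cay_key]
    push_cast
    ring
end

section
/- As formal power series in t, (1+t)^{(y+x)/2} · (1−t)^{(y−x)/2} = ∑_{m=0}^∞ Cay_m(x;y) · t^m / m!, i.e., the exponential generating function of the Cayley continuants Cay_m(x;y) is (1+t)^{(y+x)/2}(1−t)^{(y−x)/2}. -/
open Finset PowerSeries

/-- Generalized binomial coefficient `C(a,k) = a(a-1)⋯(a-k+1)/k!`. -/
noncomputable def gchoose (a : ℂ) (k : ℕ) : ℂ := fallFac a k / (k.factorial : ℂ)

/-- The binomial series `(1+t)^α = ∑ C(α,u) t^u` as a formal power series. -/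
noncomputable def onePlusPow (α : ℂ) : PowerSeries ℂ := PowerSeries.mk fun u => gchoose α u

/-- The binomial series `(1-t)^α = ∑ (-1)^u C(α,u) t^u` as a formal power series. -/
noncomputable def oneSubPow (α : ℂ) : PowerSeries ℂ :=
  PowerSeries.mk fun u => (-1 : ℂ) ^ u * gchoose α u

/-!
Both binomial series are exponential generating functions: `(1+t)^α` has coefficients
`α^{\underline{n}} / n!`, and since `(-α)^{\overline{n}} = (-1)^n α^{\underline{n}}`, `(1-t)^β` has
coefficients `(-β)^{\overline{n}} / n!`. The product of two exponential generating functions is the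
exponential generating function of the binomial convolution of their coefficient sequences, and
with `α = (x+y)/2`, `-β = (x-y)/2` that convolution is exactly `Cay_m(x;y)`.
-/

open Nat in
theorem PowerSeries.mk_div_factorial_mul_mk_div_factorial {K : Type*} [Field K] [CharZero K]
    (a b : ℕ → K) :
    (mk fun n => a n / n !) * (mk fun n => b n / n !) =
      mk fun m => (∑ j ∈ range (m + 1), (m.choose j : K) * a j * b (m - j)) / m ! := by
  ext m
  rw [coeff_mul, Nat.sum_antidiagonal_eq_sum_range_succ_mk, coeff_mk, sum_div]
  refine sum_congr rfl fun j hj => ?_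
  rw [coeff_mk, coeff_mk, Nat.cast_choose K (Nat.lt_succ_iff.mp (mem_range.mp hj))]
  have : (m ! : K) ≠ 0 := Nat.cast_ne_zero.mpr m.factorial_ne_zero
  field_simp

theorem riseFac_eq_neg_one_pow_mul_fallFac_neg (r : ℂ) (k : ℕ) :
    riseFac r k = (-1) ^ k * fallFac (-r) k := by
  simpa [riseFac, fallFac] using ascPochhammer_eval_neg_eq_descPochhammer (R := ℂ) (-r) k

theorem onePlusPow_eq_mk (α : ℂ) : onePlusPow α = mk fun n => fallFac α n / n.factorial := rfl

theorem oneSubPow_eq_mk (β : ℂ) : oneSubPow β = mk fun n => riseFac (-β) n / n.factorial := by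
  ext n
  simp only [oneSubPow, gchoose, coeff_mk, riseFac_eq_neg_one_pow_mul_fallFac_neg, neg_neg,
    mul_div_assoc]

/-- Exponential generating function of the Cayley continuants:
`(1+t)^{(y+x)/2} (1−t)^{(y−x)/2} = ∑_m Cay_m(x;y) t^m / m!`. -/
theorem cayley_generating_function (x y : ℂ) :
    onePlusPow ((y + x) / 2) * oneSubPow ((y - x) / 2) =
      PowerSeries.mk fun m => Cay m x y / (m.factorial : ℂ) := by
  rw [onePlusPow_eq_mk, oneSubPow_eq_mk, mk_div_factorial_mul_mk_div_factorial,
    show (y + x) / 2 = (x + y) / 2 by ring, show -((y - x) / 2) = (x - y) / 2 by ring]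
  rfl
end

section
/- For complex s and nonnegative integers k, m, the Cayley continuant satisfies Cay_m(s;k) = m! · 2^m · P_m^{((k+s−2m)/2, (k−s−2m)/2)}(0), where P_m^{(α,β)} is the Jacobi polynomial. -/
open Finset

/-- Jacobi polynomial. -/
noncomputable def Jacobi (α β : ℂ) (m : ℕ) (z : ℂ) : ℂ :=
  ∑ j ∈ range (m + 1),
    gchoose ((m : ℂ) + α) (m - j) * gchoose ((m : ℂ) + β) j *
      ((z - 1) / 2) ^ j * ((z + 1) / 2) ^ (m - j)

/-! At `z = 0` both sides are sums of products of two falling factorials, at the arguments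
`(s + k) / 2` and `(k - s) / 2`: on the Cayley side after turning the rising factorial of
`(s - k) / 2` into a signed falling factorial of its negative, on the Jacobi side after clearing
the factorials of the two generalized binomial coefficients against `m!`. Reversing the order of
summation matches the two sums term by term. -/

lemma riseFac_neg (r : ℂ) (n : ℕ) : riseFac (-r) n = (-1) ^ n * fallFac r n :=
  ascPochhammer_eval_neg_eq_descPochhammer ℂ r n

lemma factorial_mul_gchoose_mul_gchoose {m j : ℕ} (hj : j ≤ m) (a b : ℂ) :
    (m.factorial : ℂ) * (gchoose a (m - j) * gchoose b j) =
      m.choose j * (fallFac a (m - j) * fallFac b j) := by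
  rw [gchoose, gchoose, Nat.cast_choose ℂ hj]
  field_simp

lemma cay_eq_sum_fallFac (m : ℕ) (x y : ℂ) :
    Cay m x y = ∑ j ∈ range (m + 1),
      (m.choose j : ℂ) * (-1) ^ (m - j) * fallFac ((x + y) / 2) j *
        fallFac ((y - x) / 2) (m - j) := by
  refine sum_congr rfl fun j _ => ?_
  rw [show (x - y) / 2 = -((y - x) / 2) by ring, riseFac_neg]
  ring

lemma two_pow_mul_jacobi_zero (α β : ℂ) (m : ℕ) :
    2 ^ m * Jacobi α β m 0 = ∑ j ∈ range (m + 1),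
      (-1) ^ j * (gchoose ((m : ℂ) + α) (m - j) * gchoose ((m : ℂ) + β) j) := by
  rw [Jacobi, mul_sum]
  refine sum_congr rfl fun j hj => ?_
  have h2 : (2 : ℂ) ^ m = 2 ^ j * 2 ^ (m - j) := by
    rw [← pow_add, Nat.add_sub_cancel' (mem_range_succ_iff.mp hj)]
  rw [h2, zero_sub, zero_add, neg_div, neg_pow, div_pow, div_pow, one_pow, one_pow]
  field_simp

/-- `Cay_m(s;k) = m! · 2^m · P_m^{((k+s−2m)/2, (k−s−2m)/2)}(0)`. -/
theorem cayley_eq_jacobi_at_zero (s : ℂ) (k m : ℕ) :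
    Cay m s (k : ℂ) =
      (m.factorial : ℂ) * (2 : ℂ) ^ m *
        Jacobi (((k : ℂ) + s - 2 * m) / 2) (((k : ℂ) - s - 2 * m) / 2) m 0 := by
  rw [cay_eq_sum_fallFac, ← sum_range_reflect, mul_assoc, two_pow_mul_jacobi_zero, mul_sum]
  refine sum_congr rfl fun j hj => ?_
  have hjm : j ≤ m := mem_range_succ_iff.mp hj
  rw [Nat.add_sub_cancel, Nat.sub_sub_self hjm, Nat.choose_symm hjm,
    show (m : ℂ) + ((k : ℂ) + s - 2 * m) / 2 = (s + k) / 2 by ring,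
    show (m : ℂ) + ((k : ℂ) - s - 2 * m) / 2 = (k - s) / 2 by ring,
    mul_left_comm, factorial_mul_gchoose_mul_gchoose hjm]
  ring
end

section
/- For nonnegative integers k, ℓ, m with m ≤ k, the Cayley continuant evaluated at s = k−2ℓ satisfies (1/2^m) C(k,m) Cay_m(k−2ℓ;k) = (1/2^m) k^{\underline{m}} K_m(ℓ;k), i.e., Cay_m(k−2ℓ; k) = m! · K_m(ℓ; k), where K_m is the binary Krawtchouk polynomial. -/
open Finset

/-- Binary Krawtchouk polynomial `K_m(x;y) = ∑_j (−1)^j C(x,j) C(y−x, m−j)`. -/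
noncomputable def Kraw (m : ℕ) (x y : ℂ) : ℂ :=
  ∑ j ∈ range (m + 1), (-1 : ℂ) ^ j * gchoose x j * gchoose (y - x) (m - j)

lemma fallFac_eq_fac_mul_gchoose (a : ℂ) (j : ℕ) :
    fallFac a j = (j.factorial : ℂ) * gchoose a j := by
  have : (j.factorial : ℂ) ≠ 0 := Nat.cast_ne_zero.2 j.factorial_ne_zero
  rw [gchoose]
  field_simp

/-- For `m ≤ k`, `Cay_m(k−2ℓ; k) = m! · K_m(ℓ; k)`. -/
theorem cayley_eq_krawtchouk (k ℓ m : ℕ) (h : m ≤ k) :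
    Cay m ((k : ℂ) - 2 * ℓ) (k : ℂ) = (m.factorial : ℂ) * Kraw m (ℓ : ℂ) (k : ℂ) := by
  have h1 : ((k : ℂ) - 2 * ℓ + k) / 2 = (k : ℂ) - ℓ := by ring
  have h2 : ((k : ℂ) - 2 * ℓ - k) / 2 = -(ℓ : ℂ) := by ring
  rw [Cay, Kraw, mul_sum, ← Finset.sum_range_reflect]
  refine Finset.sum_congr rfl fun j hj => ?_
  simp only [mem_range, Nat.lt_succ_iff] at hj
  simp only [Nat.add_sub_cancel]
  rw [h1, h2, Nat.sub_sub_self hj, riseFac, ascPochhammer_eval_neg_eq_descPochhammer,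
    ← fallFac, fallFac_eq_fac_mul_gchoose ((k : ℂ) - ℓ), fallFac_eq_fac_mul_gchoose (ℓ : ℂ),
    Nat.choose_symm hj]
  have hc : ((m.choose j : ℂ)) * (j.factorial : ℂ) * ((m - j).factorial : ℂ)
      = (m.factorial : ℂ) := by
    exact_mod_cast congrArg (Nat.cast : ℕ → ℂ) (Nat.choose_mul_factorial_mul_factorial hj)
  linear_combination (gchoose ((k:ℂ) - ℓ) (m - j) * ((-1:ℂ)^j * gchoose (ℓ:ℂ) j)) * hc
end

section
/- For complex x, y and m ∈ ℤ_{≥0}, the binomial coefficient satisfies C(x, m) = (−1)^m · ∑_{r=0}^m C(x−y, m−r) · K_r(x; y), where K_r(x;y) is the binary Krawtchouk polynomial. -/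
open Finset

lemma gchoose_eq_ringChoose (a : ℂ) (k : ℕ) : gchoose a k = Ring.choose a k := by
  have h := Ring.descPochhammer_eq_factorial_smul_choose a k
  rw [Polynomial.descPochhammer_smeval_eq_ascPochhammer, Polynomial.ascPochhammer_smeval_eq_eval,
    ← descPochhammer_eval_eq_ascPochhammer] at h
  have hk : (k.factorial : ℂ) ≠ 0 := Nat.cast_ne_zero.mpr k.factorial_ne_zero
  rw [gchoose, fallFac, h, nsmul_eq_mul, mul_div_assoc]
  rw [mul_comm, div_mul_cancel₀ _ hk]

lemma gvandermonde_zero (a : ℂ) (n : ℕ) :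
    ∑ k ∈ range (n + 1), gchoose a k * gchoose (-a) (n - k) =
      if n = 0 then 1 else 0 := by
  have h := Ring.add_choose_eq (r := a) (s := -a) n (Commute.all _ _)
  rw [add_neg_cancel, Ring.choose_zero_ite,
    Finset.Nat.sum_antidiagonal_eq_sum_range_succ
      (fun i j => Ring.choose a i * Ring.choose (-a) j)] at h
  refine (Finset.sum_congr rfl fun k _ => by
    rw [gchoose_eq_ringChoose, gchoose_eq_ringChoose]).trans h.symm

/-- `C(x, m) = (−1)^m ∑_{r=0}^m C(x−y, m−r) K_r(x; y)`. -/
theorem binom_krawtchouk_inversion (x y : ℂ) (m : ℕ) :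
    gchoose x m =
      (-1 : ℂ) ^ m * ∑ r ∈ range (m + 1), gchoose (x - y) (m - r) * Kraw r x y := by
  have key : ∑ r ∈ range (m + 1), gchoose (x - y) (m - r) * Kraw r x y
      = (-1 : ℂ) ^ m * gchoose x m := by
    set f : ℕ → ℕ → ℂ := fun j k => (-1 : ℂ) ^ j * gchoose x j *
      (gchoose (y - x) k * gchoose (x - y) (m - j - k)) with hf
    have h1 : ∀ r ∈ range (m + 1),
        gchoose (x - y) (m - r) * Kraw r x y =
          ∑ j ∈ range (r + 1), f j (r - j) := by
      intro r hr
      rw [Kraw, Finset.mul_sum]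
      refine Finset.sum_congr rfl fun j hj => ?_
      have hjr : j ≤ r := Nat.lt_succ_iff.mp (mem_range.mp hj)
      simp only [hf]
      rw [show m - j - (r - j) = m - r by omega]
      ring
    rw [Finset.sum_congr rfl h1, Finset.sum_range_diag_flip (m + 1) f]
    have h2 : ∀ j ∈ range (m + 1),
        ∑ k ∈ range (m + 1 - j), f j k
        = if j = m then (-1 : ℂ) ^ m * gchoose x m else 0 := by
      intro j hj
      have hjm : j ≤ m := Nat.lt_succ_iff.mp (mem_range.mp hj)
      have hmj : m + 1 - j = (m - j) + 1 := by omega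
      simp only [hf]
      rw [← Finset.mul_sum, hmj]
      have := gvandermonde_zero (y - x) (m - j)
      rw [show -(y - x) = x - y by ring] at this
      rw [this]
      by_cases h : j = m
      · subst h; simp
      · have : m - j ≠ 0 := by omega
        simp [h, this]
    rw [Finset.sum_congr rfl h2, Finset.sum_ite_eq' (range (m + 1)) m
      (fun _ => (-1 : ℂ) ^ m * gchoose x m)]
    simp
  rw [key, ← mul_assoc, ← mul_pow]
  simp
end

section
/- Consider the ODE system on polynomials p(t) ∈ ℂ[t] of degree ≤ k given by D₊ p = 0 and D₋ p = 0, where D₊ = (λ₁+λ₂+k−2)(k−θ_t) and D₋ = 2 d/dt + (λ₁−λ₂)(k−θ_t) + (t/2)(k−1−θ_t)(k−θ_t)², with θ_t = t·d/dt and k ≥ 1. Then the solution space is nonzero if and only if λ₁+λ₂+k−2 = 0, and in that case, writing s = λ₂−λ₁, the solution space is the one-dimensional span of p_c^{(s;k)}(t) = ∑_{m=0}^k (1/2^m) C(k,m) Cay_m(s;k) t^m. -/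
/-!
The coefficient of `t^(n+1)` in `D₋ p` is `2(n+2) p_(n+2)` plus multiples of `p_(n+1)` and `p_n`,
so a solution of `D₋ p = 0` is determined by `p(0)`. The constant term of `D₊ p` is
`(λ₁+λ₂+k−2) k p(0)`, so if `λ₁+λ₂+k−2 ≠ 0` a common solution has `p(0) = 0` and vanishes.
If `λ₁+λ₂+k−2 = 0` then `D₊ = 0`, and for `p_c` the recurrence becomes, via
`C(k,n+1)(n+1) = C(k,n)(k−n)`, the continuant recurrence of `Cay_m`. The latter follows from the
explicit sum `∑ C(m,i) a^(i↓) b^(j↑)` (`a + b = s`, `a − b = k`) by Pascal's rule and absorption.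
-/
open Finset Polynomial

/-- The operator `(c − θ_t)` on `ℂ[t]`, where `θ_t = t·d/dt`. -/
noncomputable def A (c : ℂ) (p : Polynomial ℂ) : Polynomial ℂ :=
  Polynomial.C c * p - Polynomial.X * derivative p

/-- The operator `D₊ = (λ₁+λ₂+k−2)(k−θ_t)`. -/
noncomputable def Dplus (lam1 lam2 : ℂ) (k : ℕ) (p : Polynomial ℂ) : Polynomial ℂ :=
  Polynomial.C (lam1 + lam2 + k - 2) * A (k : ℂ) p

/-- The operator `D₋ = 2 d/dt + (λ₁−λ₂)(k−θ_t) + (t/2)(k−1−θ_t)(k−θ_t)²`. -/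
noncomputable def Dminus (lam1 lam2 : ℂ) (k : ℕ) (p : Polynomial ℂ) : Polynomial ℂ :=
  2 * derivative p + Polynomial.C (lam1 - lam2) * A (k : ℂ) p +
    Polynomial.C (1 / 2 : ℂ) * Polynomial.X * A ((k : ℂ) - 1) (A (k : ℂ) (A (k : ℂ) p))

/-- The polynomial `p_c^{(s;k)}(t) = ∑_{m=0}^k (1/2^m) C(k,m) Cay_m(s;k) t^m`. -/
noncomputable def pcPoly (s : ℂ) (k : ℕ) : Polynomial ℂ :=
  ∑ m ∈ range (k + 1),
    Polynomial.C ((1 / 2 ^ m : ℂ) * (k.choose m : ℂ) * Cay m s (k : ℂ)) * Polynomial.X ^ m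

lemma fallFac_succ (r : ℂ) (j : ℕ) : fallFac r (j + 1) = fallFac r j * (r - j) := by
  simp [fallFac, descPochhammer_succ_right]

lemma riseFac_succ (r : ℂ) (j : ℕ) : riseFac r (j + 1) = riseFac r j * (r + j) := by
  simp [riseFac, ascPochhammer_succ_right]

section CayleySum

variable (a b : ℂ)

noncomputable def cayleySum (m : ℕ) : ℂ :=
  ∑ ij ∈ antidiagonal m, (m.choose ij.1 : ℂ) * (fallFac a ij.1 * riseFac b ij.2)

noncomputable def cayleyMoment (m : ℕ) : ℂ :=
  ∑ ij ∈ antidiagonal m, (m.choose ij.1 : ℂ) * (ij.1 * (fallFac a ij.1 * riseFac b ij.2))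

lemma Cay_eq_cayleySum (m : ℕ) (x y : ℂ) :
    Cay m x y = cayleySum ((x + y) / 2) ((x - y) / 2) m := by
  rw [cayleySum, Nat.sum_antidiagonal_eq_sum_range_succ_mk, Cay]
  simp only [mul_assoc]

lemma cayleySum_succ (m : ℕ) :
    cayleySum a b (m + 1) = (a + b + m) * cayleySum a b m - 2 * cayleyMoment a b m := by
  rw [cayleySum, sum_antidiagonal_choose_succ_mul (fun i j => fallFac a i * riseFac b j),
    cayleySum, cayleyMoment, mul_sum, mul_sum, ← sum_add_distrib, ← sum_sub_distrib]
  refine sum_congr rfl fun ij hij => ?_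
  have hm : (ij.1 : ℂ) + ij.2 = m := by exact_mod_cast mem_antidiagonal.mp hij
  rw [← Nat.choose_symm_of_eq_add (mem_antidiagonal.mp hij).symm, fallFac_succ, riseFac_succ]
  linear_combination (m.choose ij.1 : ℂ) * fallFac a ij.1 * riseFac b ij.2 * hm

lemma cayleyMoment_succ (m : ℕ) :
    cayleyMoment a b (m + 1) = (m + 1) * (a * cayleySum a b m - cayleyMoment a b m) := by
  rw [cayleyMoment, Nat.sum_antidiagonal_succ, cayleySum, cayleyMoment, mul_sum,
    ← sum_sub_distrib, mul_sum]
  simp only [Nat.cast_zero, zero_mul, mul_zero, zero_add]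
  refine sum_congr rfl fun ij _ => ?_
  have h := congrArg (Nat.cast (R := ℂ)) (Nat.add_one_mul_choose_eq m ij.1)
  push_cast at h
  rw [fallFac_succ]
  push_cast
  linear_combination (fallFac a ij.1 * (a - ij.1) * riseFac b ij.2) * h.symm

end CayleySum

lemma Cay_zero (x y : ℂ) : Cay 0 x y = 1 := by
  simp [Cay, fallFac, riseFac]

lemma Cay_one (x y : ℂ) : Cay 1 x y = x := by
  have h : (x - y) / 2 + (x + y) / 2 = x := by ring
  simpa [Cay, sum_range_succ, fallFac, riseFac] using h

lemma Cay_add_two (m : ℕ) (x y : ℂ) :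
    Cay (m + 2) x y = x * Cay (m + 1) x y - (m + 1) * (y - m) * Cay m x y := by
  simp only [Cay_eq_cayleySum, cayleySum_succ, cayleyMoment_succ]
  push_cast
  ring

lemma cast_choose_succ_mul (k n : ℕ) :
    (k.choose (n + 1) : ℂ) * (n + 1) = k.choose n * (k - n) := by
  rcases le_or_gt n k with h | h
  · have := congrArg (Nat.cast (R := ℂ)) (Nat.choose_succ_right_eq k n)
    push_cast [Nat.cast_sub h] at this
    exact this
  · simp [Nat.choose_eq_zero_of_lt h, Nat.choose_eq_zero_of_lt (Nat.lt_succ_of_lt h)]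

lemma coeff_A (c : ℂ) (p : ℂ[X]) (n : ℕ) : (A c p).coeff n = (c - n) * p.coeff n := by
  rcases n with _ | n
  · simp [A, mul_comm]
  · simp only [A, coeff_sub, coeff_C_mul, coeff_X_mul, coeff_derivative]
    push_cast
    ring

lemma coeff_Dplus_zero (l1 l2 : ℂ) (k : ℕ) (p : ℂ[X]) :
    (Dplus l1 l2 k p).coeff 0 = (l1 + l2 + k - 2) * k * p.coeff 0 := by
  simp [Dplus, coeff_A, mul_assoc]

lemma Dplus_eq_zero (l1 l2 : ℂ) (k : ℕ) (h : l1 + l2 + k - 2 = 0) (p : ℂ[X]) :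
    Dplus l1 l2 k p = 0 := by
  rw [Dplus, h, C_0, zero_mul]

lemma coeff_Dminus_zero (l1 l2 : ℂ) (k : ℕ) (p : ℂ[X]) :
    (Dminus l1 l2 k p).coeff 0 = 2 * p.coeff 1 + (l1 - l2) * k * p.coeff 0 := by
  simp only [Dminus, coeff_add, mul_assoc, mul_coeff_zero, coeff_C_zero, coeff_X_zero, coeff_A,
    coeff_ofNat_mul, coeff_derivative]
  push_cast
  ring

lemma coeff_Dminus_succ (l1 l2 : ℂ) (k : ℕ) (p : ℂ[X]) (n : ℕ) :
    (Dminus l1 l2 k p).coeff (n + 1) = 2 * (n + 2) * p.coeff (n + 2)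
      + (l1 - l2) * (k - (n + 1)) * p.coeff (n + 1)
      + 1 / 2 * (k - 1 - n) * (k - n) ^ 2 * p.coeff n := by
  simp only [Dminus, coeff_add, mul_assoc, coeff_C_mul, coeff_X_mul, coeff_A, coeff_ofNat_mul,
    coeff_derivative]
  push_cast
  ring

lemma Dminus_zero (l1 l2 : ℂ) (k : ℕ) : Dminus l1 l2 k 0 = 0 := by
  simp [Dminus, A]

lemma A_smul (c d : ℂ) (p : ℂ[X]) : A c (d • p) = d • A c p := by
  simp [A, smul_sub]

lemma Dminus_smul (l1 l2 : ℂ) (k : ℕ) (c : ℂ) (p : ℂ[X]) :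
    Dminus l1 l2 k (c • p) = c • Dminus l1 l2 k p := by
  simp [Dminus, A_smul, smul_add]

lemma eq_of_Dminus_eq_zero {l1 l2 : ℂ} {k : ℕ} {p q : ℂ[X]} (hp : Dminus l1 l2 k p = 0)
    (hq : Dminus l1 l2 k q = 0) (h0 : p.coeff 0 = q.coeff 0) : p = q := by
  suffices h : ∀ n, p.coeff n = q.coeff n ∧ p.coeff (n + 1) = q.coeff (n + 1) from
    ext fun n => (h n).1
  intro n
  induction n with
  | zero =>
    have hp0 := coeff_Dminus_zero l1 l2 k p
    have hq0 := coeff_Dminus_zero l1 l2 k q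
    rw [hp, coeff_zero] at hp0
    rw [hq, coeff_zero] at hq0
    exact ⟨h0, by linear_combination (hq0 - hp0 - (l1 - l2) * k * h0) / 2⟩
  | succ n ih =>
    have hpn := coeff_Dminus_succ l1 l2 k p n
    have hqn := coeff_Dminus_succ l1 l2 k q n
    rw [hp, coeff_zero] at hpn
    rw [hq, coeff_zero] at hqn
    have hn : (2 * (n + 2) : ℂ) ≠ 0 := by exact_mod_cast Nat.succ_ne_zero (2 * n + 3)
    refine ⟨ih.2, mul_left_cancel₀ hn ?_⟩
    linear_combination hqn - hpn - (l1 - l2) * (k - (n + 1)) * ih.2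
      - 1 / 2 * (k - 1 - n) * (k - n) ^ 2 * ih.1

lemma coeff_pcPoly (s : ℂ) (k n : ℕ) :
    (pcPoly s k).coeff n = 1 / 2 ^ n * k.choose n * Cay n s k := by
  rw [pcPoly, finsetSum_coeff]
  simp only [coeff_C_mul_X_pow]
  rw [sum_ite_eq (range (k + 1)) n]
  split_ifs with h
  · rfl
  · rw [Nat.choose_eq_zero_of_lt (by simpa using h)]
    simp

lemma coeff_pcPoly_zero (s : ℂ) (k : ℕ) : (pcPoly s k).coeff 0 = 1 := by
  simp [coeff_pcPoly, Cay_zero]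

lemma pcPoly_ne_zero (s : ℂ) (k : ℕ) : pcPoly s k ≠ 0 := fun h => by
  simpa [h] using coeff_pcPoly_zero s k

lemma degree_pcPoly_le (s : ℂ) (k : ℕ) : (pcPoly s k).degree ≤ k := by
  rw [degree_le_iff_coeff_zero]
  intro n hn
  rw [coeff_pcPoly, Nat.choose_eq_zero_of_lt (by exact_mod_cast hn)]
  simp

lemma Dminus_pcPoly (l1 l2 : ℂ) (k : ℕ) : Dminus l1 l2 k (pcPoly (l2 - l1) k) = 0 := by
  ext n
  rw [coeff_zero]
  rcases n with _ | n
  · rw [coeff_Dminus_zero, coeff_pcPoly, coeff_pcPoly, Cay_zero, Cay_one, Nat.choose_one_right,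
      Nat.choose_zero_right]
    push_cast
    ring
  · rw [coeff_Dminus_succ, coeff_pcPoly, coeff_pcPoly, coeff_pcPoly, Cay_add_two]
    have c1 := cast_choose_succ_mul k (n + 1)
    have c2 := cast_choose_succ_mul k n
    push_cast at c1 c2 ⊢
    linear_combination
      (1 / 2 ^ (n + 1) * ((l2 - l1) * Cay (n + 1) (l2 - l1) k
        - (n + 1) * (k - n) * Cay n (l2 - l1) k)) * c1
      - (1 / 2 ^ (n + 1) * (k - (n + 1)) * (k - n) * Cay n (l2 - l1) k) * c2

/-- For `k ≥ 1`: the space of polynomials `p` of degree `≤ k` with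
`D₊p = D₋p = 0` is nonzero iff `λ₁+λ₂+k−2 = 0`, in which case it is
the one-dimensional span of `p_c^{(s;k)}` with `s = λ₂−λ₁`. -/
theorem solution_space_diag (k : ℕ) (hk : 1 ≤ k) (lam1 lam2 : ℂ) :
    ((∃ p : Polynomial ℂ, p ≠ 0 ∧ p.degree ≤ k ∧
        Dplus lam1 lam2 k p = 0 ∧ Dminus lam1 lam2 k p = 0) ↔
      lam1 + lam2 + k - 2 = 0) ∧
    (lam1 + lam2 + k - 2 = 0 →
      ∀ p : Polynomial ℂ,
        (p.degree ≤ k ∧ Dplus lam1 lam2 k p = 0 ∧ Dminus lam1 lam2 k p = 0) ↔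
          ∃ c : ℂ, p = c • pcPoly (lam2 - lam1) k) := by
  have hsol : ∀ c : ℂ, Dminus lam1 lam2 k (c • pcPoly (lam2 - lam1) k) = 0 := fun c => by
    rw [Dminus_smul, Dminus_pcPoly, smul_zero]
  refine ⟨⟨?_, fun hσ => ?_⟩, fun hσ p => ⟨?_, ?_⟩⟩
  · rintro ⟨p, hp, -, hDp, hDm⟩
    by_contra hσ
    have hk0 : (k : ℂ) ≠ 0 := by exact_mod_cast (Nat.one_le_iff_ne_zero.mp hk)
    have h0 : p.coeff 0 = 0 := by
      simpa [hσ, hk0, hDp] using coeff_Dplus_zero lam1 lam2 k p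
    exact hp (eq_of_Dminus_eq_zero hDm (Dminus_zero lam1 lam2 k) (by rw [h0, coeff_zero]))
  · exact ⟨pcPoly (lam2 - lam1) k, pcPoly_ne_zero _ _, degree_pcPoly_le _ _,
      Dplus_eq_zero lam1 lam2 k hσ _, Dminus_pcPoly lam1 lam2 k⟩
  · rintro ⟨-, -, hDm⟩
    exact ⟨p.coeff 0, eq_of_Dminus_eq_zero hDm (hsol _) (by simp [coeff_pcPoly_zero])⟩
  · rintro ⟨c, rfl⟩
    exact ⟨(degree_smul_le _ _).trans (degree_pcPoly_le _ _), Dplus_eq_zero lam1 lam2 k hσ _,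
      hsol c⟩
end
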